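/- In a commutative idempotent involutive residuated lattice, for every negative element a (a ≤ 1) and every x, the following are equivalent: (i) a ≤ x ≤ a → 1; (ii) a ≤ x ≤ 1_a; (iii) a · x = a. -/

import Mathlib

/-- A commutative idempotent involutive residuated lattice. -/
class CIdInRL (α : Type*) extends Lattice α, CommMonoid α, Zero α where
  arrow : α → α → α
  residuation : ∀ x y z : α, x * y ≤ z ↔ y ≤ arrow x z
  idem : ∀ x : α, x * x = x
  involutive : ∀ x : α, arrow (arrow x 0) 0 = x

namespace CIdInRL
variable {α : Type*} [CIdInRL α]
/-- linear negation ¬x := x → 0 -/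
def neg (x : α) : α := arrow x 0
/-- 0_x := x ∧ ¬x -/
def zx (x : α) : α := x ⊓ neg x
/-- 1_x := x ∨ ¬x -/
def ox (x : α) : α := x ⊔ neg x
/-- monoidal order x ⊑ y iff x·y = x -/
def mleq (x y : α) : Prop := x * y = x
end CIdInRL

/-!
Since multiplication is idempotent, `a ≤ x` already gives `a = a·a ≤ a·x`, so each of (i) and
(ii) reduces to the upper bound `a·x ≤ a`. Under (i) it follows from `a·x ≤ 1` via
`a·x = a·(a·x)`; under (ii) from `a·1_a = a`. Conversely, if `a·x = a` then `a = a·x ≤ 1·x`,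
`a·x ≤ 1` gives `x ≤ a → 1`, and `0_a·x ≤ a·¬a·x = a·¬a ≤ 0` gives `x ≤ ¬0_a = 1_a`
by De Morgan.
-/

namespace CIdInRL

variable {α : Type*} [CIdInRL α] {a x y : α}

instance : IsOrderedMonoid α where
  mul_le_mul_left a b h c := by
    rw [mul_comm a, mul_comm b]
    exact (residuation c a (c * b)).mpr (h.trans ((residuation c b (c * b)).mp le_rfl))

theorem le_neg_iff_mul_le_zero : y ≤ neg x ↔ x * y ≤ 0 :=
  (residuation x y 0).symm

theorem mul_neg_self_le_zero (x : α) : x * neg x ≤ 0 :=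
  le_neg_iff_mul_le_zero.mp le_rfl

theorem neg_neg (x : α) : neg (neg x) = x :=
  involutive x

theorem neg_le_neg (h : x ≤ y) : neg y ≤ neg x :=
  le_neg_iff_mul_le_zero.mpr <|
    calc x * neg y ≤ y * neg y := by gcongr
      _ ≤ 0 := mul_neg_self_le_zero y

theorem neg_le_comm : neg x ≤ y ↔ neg y ≤ x :=
  ⟨fun h => neg_neg x ▸ neg_le_neg h, fun h => neg_neg y ▸ neg_le_neg h⟩

theorem neg_inf (x y : α) : neg (x ⊓ y) = neg x ⊔ neg y :=
  le_antisymm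
    (neg_le_comm.mp <| le_inf (neg_le_comm.mp le_sup_left) (neg_le_comm.mp le_sup_right))
    (sup_le (neg_le_neg inf_le_left) (neg_le_neg inf_le_right))

theorem neg_zx (a : α) : neg (zx a) = ox a := by
  rw [zx, ox, neg_inf, neg_neg, sup_comm]

theorem zx_le_mul_neg (a : α) : zx a ≤ a * neg a :=
  calc zx a = zx a * zx a := (idem _).symm
    _ ≤ a * neg a := mul_le_mul' inf_le_left inf_le_right

theorem mul_neg_self_le_self (a : α) : a * neg a ≤ a := by
  rw [← neg_neg a, le_neg_iff_mul_le_zero, neg_neg, mul_left_comm, idem]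
  exact mul_neg_self_le_zero a

theorem mul_ox_self (a : α) : a * ox a = a :=
  le_antisymm
    ((residuation a (ox a) a).mpr <| sup_le
      ((residuation a a a).mp (idem a).le) ((residuation a (neg a) a).mp (mul_neg_self_le_self a)))
    (calc a = a * a := (idem a).symm
      _ ≤ a * ox a := by gcongr; exact le_sup_left)

theorem mul_eq_left_of_le (hax : a ≤ x) (h : a * x ≤ a) : a * x = a :=
  le_antisymm h <|
    calc a = a * a := (idem a).symm
      _ ≤ a * x := by gcongr

theorem mul_le_left_of_mul_le_one (h : a * x ≤ 1) : a * x ≤ a :=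
  calc a * x = a * (a * x) := by rw [← mul_assoc, idem]
    _ ≤ a * 1 := by gcongr
    _ = a := mul_one a

theorem le_of_mul_eq_left (ha : a ≤ 1) (h : a * x = a) : a ≤ x :=
  calc a = a * x := h.symm
    _ ≤ 1 * x := by gcongr
    _ = x := one_mul x

theorem le_ox_of_mul_eq_left (h : a * x = a) : x ≤ ox a := by
  rw [← neg_zx, le_neg_iff_mul_le_zero]
  calc zx a * x ≤ a * neg a * x := by gcongr; exact zx_le_mul_neg a
    _ = a * neg a := by rw [mul_right_comm, h]
    _ ≤ 0 := mul_neg_self_le_zero a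

theorem mul_eq_left_iff_le_arrow_one (ha : a ≤ 1) : a * x = a ↔ a ≤ x ∧ x ≤ arrow a 1 :=
  ⟨fun h => ⟨le_of_mul_eq_left ha h, (residuation a x 1).mp (h.trans_le ha)⟩,
    fun ⟨hax, hx⟩ =>
      mul_eq_left_of_le hax (mul_le_left_of_mul_le_one ((residuation a x 1).mpr hx))⟩

theorem mul_eq_left_iff_le_ox (ha : a ≤ 1) : a * x = a ↔ a ≤ x ∧ x ≤ ox a :=
  ⟨fun h => ⟨le_of_mul_eq_left ha h, le_ox_of_mul_eq_left h⟩,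
    fun ⟨hax, hx⟩ => mul_eq_left_of_le hax <|
      calc a * x ≤ a * ox a := by gcongr
        _ = a := mul_ox_self a⟩

end CIdInRL

open CIdInRL in
theorem stmt11 {α : Type*} [CIdInRL α] (a x : α) (ha : a ≤ 1) :
    ((a ≤ x ∧ x ≤ arrow a 1) ↔ (a ≤ x ∧ x ≤ ox a)) ∧
    ((a ≤ x ∧ x ≤ ox a) ↔ a * x = a) :=
  ⟨(mul_eq_left_iff_le_arrow_one ha).symm.trans (mul_eq_left_iff_le_ox ha),
    (mul_eq_left_iff_le_ox ha).symm⟩
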